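/- arXiv:2301.11922 — 3 statements merged into one kernel-verified Lean document; each statement's English description precedes it below -/
import Mathlib

section
/- If w ≥ w_obj > 0, I = ⌊w/w_obj⌋ and N ∈ {I, I+1} with N ≥ 1, then w/N ∈ [w_obj/2, 2·w_obj]; that is, each fragment produced by conservative splitting has weight between w_obj/2 and 2·w_obj. -/
namespace Nat

variable {x : ℝ} {N : ℕ}

theorem cast_le_two_mul_of_le_floor_add_one (hx : 1 ≤ x) (hN : N ≤ ⌊x⌋₊ + 1) :
    (N : ℝ) ≤ 2 * x :=
  calc (N : ℝ) ≤ ⌊x⌋₊ + 1 := by exact_mod_cast hN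
    _ ≤ x + 1 := by gcongr; exact floor_le (by linarith)
    _ ≤ 2 * x := by linarith

theorem le_two_mul_cast_of_floor_le (hx : 1 ≤ x) (hN : ⌊x⌋₊ ≤ N) : x ≤ 2 * N := by
  have hfloor : (1 : ℝ) ≤ ⌊x⌋₊ := by exact_mod_cast one_le_floor_iff x |>.mpr hx
  calc x ≤ ⌊x⌋₊ + 1 := (lt_floor_add_one x).le
    _ ≤ 2 * ⌊x⌋₊ := by linarith
    _ ≤ 2 * N := by gcongr

end Nat

theorem fragment_weight_bounds_general (w wobj : ℝ) (hwobj : 0 < wobj) (hw : wobj ≤ w)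
    (N : ℕ) (hN : N = ⌊w / wobj⌋₊ ∨ N = ⌊w / wobj⌋₊ + 1) :
    wobj / 2 ≤ w / N ∧ w / N ≤ 2 * wobj := by
  have hx : 1 ≤ w / wobj := (one_le_div hwobj).mpr hw
  have hxN := Nat.le_two_mul_cast_of_floor_le hx (by omega : ⌊w / wobj⌋₊ ≤ N)
  have hNx := Nat.cast_le_two_mul_of_le_floor_add_one hx (by omega : N ≤ ⌊w / wobj⌋₊ + 1)
  have hNpos : (0 : ℝ) < N := by linarith
  rw [div_le_iff₀ hwobj] at hxN
  rw [← mul_div_assoc, le_div_iff₀ hwobj] at hNx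
  constructor
  · rw [le_div_iff₀ hNpos]; linarith
  · rw [div_le_iff₀ hNpos]; linarith

/-- Each fragment produced by conservative splitting of a particle of weight
`w ≥ w_obj` into `N ∈ {⌊w/w_obj⌋, ⌊w/w_obj⌋+1}` equal parts (with `N ≥ 1`)
has weight `w/N ∈ [w_obj/2, 2·w_obj]`. -/
theorem fragment_weight_bounds (w wobj : ℝ) (hwobj : 0 < wobj) (hw : wobj ≤ w)
    (N : ℕ) (hN : N = ⌊w / wobj⌋₊ ∨ N = ⌊w / wobj⌋₊ + 1) (hN1 : 1 ≤ N) :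
    wobj / 2 ≤ w / N ∧ w / N ≤ 2 * wobj :=
  fragment_weight_bounds_general w wobj hwobj hw N hN
end

section
/- In the conservative splitting chain started with at most N_obj particles of total mass N_obj·w_obj, the number of nonzero particles satisfies N_l ≤ 6·N_obj for all l ≥ 0, and the minimal nonzero weight satisfies min_j X_l^j ≥ w_obj/10 for all l ≥ 1. -/
/-- Result of treating one particle of weight `w`: Russian Roulette if
`w < w_obj` (killed, or survives with weight `w_obj`), conservative splitting
into `N ∈ {⌊w/w_obj⌋, ⌊w/w_obj⌋+1}` equal parts if `w ≥ w_obj`. -/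
def SplitResult (wobj w : ℝ) (l : List ℝ) : Prop :=
  (w < wobj ∧ (l = [] ∨ l = [wobj])) ∨
  (wobj ≤ w ∧ ∃ N : ℕ, 1 ≤ N ∧ (N = ⌊w / wobj⌋₊ ∨ N = ⌊w / wobj⌋₊ + 1) ∧
    l = List.replicate N (w / N))

/-- One step of the conservative splitting chain with no source term: each
particle undergoes Russian Roulette or conservative splitting, then all
resulting weights are renormalized by a common factor restoring the total
mass `N_obj · w_obj`. -/
def StepRel (Nobj : ℕ) (wobj : ℝ) (X Y : List ℝ) : Prop :=
  ∃ ls : List (List ℝ), List.Forall₂ (fun w l => SplitResult wobj w l) X ls ∧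
    0 < ls.flatten.sum ∧
    Y = ls.flatten.map (fun w => ((Nobj : ℝ) * wobj / ls.flatten.sum) * w)

/-!
After one step every weight produced by roulette or splitting lies in `[w_obj/2, 2 w_obj]`,
so after renormalization any two weights differ by a factor at most `4`. If some particle
has weight `≥ w_obj`, this ratio bound forces all weights to be `≥ w_obj/4`, hence there are at
most `4 N_obj` of them; splitting then creates at most `N_obj` extra particles and at most
`N_obj · w_obj` extra mass. If every particle is below `w_obj`, roulette neither adds particles
nor pushes the total mass above `5 N_obj · w_obj`. Either way the pre-normalization mass is at
most `5 N_obj · w_obj`, so the renormalization factor is at least `1/5` and every weight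
is at least `w_obj/10`.
-/

theorem List.Forall₂.sum_map_le_sum_map {α β M : Type*} [AddMonoid M] [Preorder M]
    [AddRightMono M] [AddLeftMono M] {R : α → β → Prop} {f : α → M} {g : β → M}
    {l₁ : List α} {l₂ : List β} (h : List.Forall₂ R l₁ l₂) (hfg : ∀ a b, R a b → g b ≤ f a) :
    (l₂.map g).sum ≤ (l₁.map f).sum :=
  List.Forall₂.sum_le_sum <| List.forall₂_map_left_iff.2 <| List.forall₂_map_right_iff.2 <|
    h.flip.imp fun b a hab => hfg a b hab

theorem List.Forall₂.forall_mem_right {α β : Type*} {R : α → β → Prop} {P : β → Prop}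
    {l₁ : List α} {l₂ : List β} (h : List.Forall₂ R l₁ l₂) (hP : ∀ a b, R a b → P b) :
    ∀ b ∈ l₂, P b :=
  ((List.forall₂_and_left l₂ l₁).1 (h.flip.imp fun b a hab => ⟨hP a b hab, hab⟩)).1

theorem floor_or_succ_mul_bounds {wobj w : ℝ} (hwobj : 0 < wobj) (hw : 0 ≤ w) {N : ℕ}
    (hN : N = ⌊w / wobj⌋₊ ∨ N = ⌊w / wobj⌋₊ + 1) :
    (N : ℝ) * wobj ≤ w + wobj ∧ w < ((N : ℝ) + 1) * wobj := by
  have hfloor_le : (⌊w / wobj⌋₊ : ℝ) * wobj ≤ w :=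
    (le_div_iff₀ hwobj).1 (Nat.floor_le (div_nonneg hw hwobj.le))
  have hlt_floor : w < ((⌊w / wobj⌋₊ : ℝ) + 1) * wobj :=
    (div_lt_iff₀ hwobj).1 (Nat.lt_floor_add_one _)
  rcases hN with rfl | rfl <;> push_cast <;> constructor <;> nlinarith

namespace SplitResult

variable {wobj w : ℝ} {l : List ℝ}

theorem eq_nil_or_eq_singleton_of_lt (h : SplitResult wobj w l) (hw : w < wobj) :
    l = [] ∨ l = [wobj] := by
  rcases h with ⟨-, hl⟩ | ⟨hle, -⟩
  · exact hl
  · exact absurd hle hw.not_ge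

theorem length_le_one_of_lt (h : SplitResult wobj w l) (hw : w < wobj) : l.length ≤ 1 := by
  rcases h.eq_nil_or_eq_singleton_of_lt hw with rfl | rfl <;> simp

theorem eq_of_mem_of_lt (h : SplitResult wobj w l) (hw : w < wobj) : ∀ p ∈ l, p = wobj := by
  rcases h.eq_nil_or_eq_singleton_of_lt hw with rfl | rfl <;> simp

theorem mem_Icc (hwobj : 0 < wobj) (h : SplitResult wobj w l) :
    ∀ p ∈ l, p ∈ Set.Icc (wobj / 2) (2 * wobj) := by
  rcases h with ⟨-, rfl | rfl⟩ | ⟨hle, N, hN1, hN, rfl⟩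
  · simp
  · simp only [List.mem_singleton, forall_eq, Set.mem_Icc]
    constructor <;> linarith
  · obtain ⟨hN_le, hN_gt⟩ := floor_or_succ_mul_bounds hwobj (hwobj.le.trans hle) hN
    have hN0 : (0 : ℝ) < N := by exact_mod_cast hN1
    have hN1' : (1 : ℝ) ≤ N := by exact_mod_cast hN1
    intro p hp
    rw [List.eq_of_mem_replicate hp, Set.mem_Icc, le_div_iff₀ hN0, div_le_iff₀ hN0]
    constructor <;> nlinarith

theorem sum_le (hwobj : 0 < wobj) (hw : 0 ≤ w) (h : SplitResult wobj w l) : l.sum ≤ w + wobj := by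
  rcases h with ⟨-, rfl | rfl⟩ | ⟨-, N, hN1, -, rfl⟩
  · simp only [List.sum_nil]; linarith
  · simp only [List.sum_singleton]; linarith
  · have hN0 : (N : ℝ) ≠ 0 := by exact_mod_cast (Nat.one_le_iff_ne_zero.1 hN1)
    rw [List.sum_replicate, nsmul_eq_mul, mul_div_cancel₀ _ hN0]
    linarith

theorem length_mul_le (hwobj : 0 < wobj) (hw : 0 ≤ w) (h : SplitResult wobj w l) :
    (l.length : ℝ) * wobj ≤ w + wobj := by
  rcases h with ⟨-, rfl | rfl⟩ | ⟨hle, N, -, hN, rfl⟩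
  · simp only [List.length_nil, Nat.cast_zero, zero_mul]; linarith
  · simp only [List.length_singleton, Nat.cast_one, one_mul]; linarith
  · rw [List.length_replicate]
    exact (floor_or_succ_mul_bounds hwobj (hwobj.le.trans hle) hN).1

theorem mem_Icc_of_mem_flatten (hwobj : 0 < wobj) {X : List ℝ} {ls : List (List ℝ)}
    (h : List.Forall₂ (fun w l => SplitResult wobj w l) X ls) :
    ∀ p ∈ ls.flatten, p ∈ Set.Icc (wobj / 2) (2 * wobj) :=
  List.forall_mem_flatten.2 (h.forall_mem_right fun _ _ hwl => hwl.mem_Icc hwobj)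

end SplitResult

structure ChainInvariant (Nobj : ℕ) (wobj : ℝ) (X : List ℝ) : Prop where
  sum_eq : X.sum = Nobj * wobj
  length_le : X.length ≤ 5 * Nobj
  le_of_mem : ∀ w ∈ X, wobj / 10 ≤ w
  le_four_mul : ∀ v ∈ X, ∀ w ∈ X, v ≤ 4 * w

theorem chainInvariant_renormalize {Nobj : ℕ} {wobj : ℝ} (hwobj : 0 < wobj) {P : List ℝ}
    (hP : ∀ p ∈ P, p ∈ Set.Icc (wobj / 2) (2 * wobj)) (hS : 0 < P.sum)
    (hS_le : P.sum ≤ 5 * (Nobj * wobj)) (hlen : P.length ≤ 5 * Nobj) :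
    ChainInvariant Nobj wobj (P.map fun p => (Nobj * wobj / P.sum) * p) := by
  set c : ℝ := Nobj * wobj / P.sum
  have hc : 1 / 5 ≤ c := by rw [le_div_iff₀ hS]; linarith
  refine ⟨?_, by rwa [List.length_map], ?_, ?_⟩
  · rw [List.sum_map_mul_left, List.map_id', div_mul_cancel₀ _ hS.ne']
  · simp only [List.mem_map, forall_exists_index, and_imp, forall_apply_eq_imp_iff₂]
    intro p hp
    have := (hP p hp).1
    nlinarith
  · simp only [List.mem_map, forall_exists_index, and_imp, forall_apply_eq_imp_iff₂]
    intro p hp q hq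
    have := (hP p hp).2
    have := (hP q hq).1
    nlinarith

namespace StepRel

variable {Nobj : ℕ} {wobj : ℝ} {X Y : List ℝ}

theorem chainInvariant_of_length_le (hwobj : 0 < wobj) (h : StepRel Nobj wobj X Y)
    (hpos : ∀ w ∈ X, 0 < w) (hsum : X.sum = Nobj * wobj) (hlen : X.length ≤ 4 * Nobj) :
    ChainInvariant Nobj wobj Y := by
  obtain ⟨ls, hsplit, hS, rfl⟩ := h
  have hsplit_and := (List.forall₂_and_left X ls).2 ⟨hpos, hsplit⟩
  have hmass : ls.flatten.sum ≤ X.sum + X.length * wobj := by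
    rw [List.sum_flatten]
    simpa [List.sum_map_add] using hsplit_and.sum_map_le_sum_map (f := (· + wobj))
      fun w l hwl => hwl.2.sum_le hwobj hwl.1.le
  have hcount : (ls.flatten.length : ℝ) * wobj ≤ X.sum + X.length * wobj := by
    rw [List.length_flatten, Nat.cast_list_sum, List.map_map, ← List.sum_map_mul_right]
    simpa [List.sum_map_add] using hsplit_and.sum_map_le_sum_map (f := (· + wobj))
      fun w l hwl => hwl.2.length_mul_le hwobj hwl.1.le
  have hlen' : (X.length : ℝ) ≤ 4 * Nobj := by exact_mod_cast hlen
  apply chainInvariant_renormalize hwobj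
    (SplitResult.mem_Icc_of_mem_flatten hwobj hsplit) hS
  · nlinarith
  · have : (ls.flatten.length : ℝ) ≤ 5 * Nobj := by
      rw [← mul_le_mul_iff_of_pos_right hwobj]; nlinarith
    exact_mod_cast this

theorem chainInvariant_of_forall_lt (hwobj : 0 < wobj) (h : StepRel Nobj wobj X Y)
    (hlt : ∀ w ∈ X, w < wobj) (hlen : X.length ≤ 5 * Nobj) : ChainInvariant Nobj wobj Y := by
  obtain ⟨ls, hsplit, hS, rfl⟩ := h
  have hsplit_and := (List.forall₂_and_left X ls).2 ⟨hlt, hsplit⟩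
  have hcount : ls.flatten.length ≤ X.length := by
    rw [List.length_flatten]
    simpa using hsplit_and.sum_map_le_sum_map (f := fun _ => 1)
      fun w l hwl => hwl.2.length_le_one_of_lt hwl.1
  have hmass : ls.flatten.sum = ls.flatten.length * wobj := by
    rw [List.sum_eq_card_nsmul _ wobj, nsmul_eq_mul]
    exact List.forall_mem_flatten.2
      (hsplit_and.forall_mem_right fun _ _ hwl => hwl.2.eq_of_mem_of_lt hwl.1)
  apply chainInvariant_renormalize hwobj
    (SplitResult.mem_Icc_of_mem_flatten hwobj hsplit) hS
  · have : (ls.flatten.length : ℝ) ≤ 5 * Nobj := by exact_mod_cast hcount.trans hlen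
    rw [hmass]; nlinarith
  · exact hcount.trans hlen

end StepRel

theorem ChainInvariant.step {Nobj : ℕ} {wobj : ℝ} (hwobj : 0 < wobj) {X Y : List ℝ}
    (hX : ChainInvariant Nobj wobj X) (h : StepRel Nobj wobj X Y) :
    ChainInvariant Nobj wobj Y := by
  have hpos : ∀ w ∈ X, 0 < w := fun w hw => by linarith [hX.le_of_mem w hw]
  by_cases hlt : ∀ w ∈ X, w < wobj
  · exact h.chainInvariant_of_forall_lt hwobj hlt hX.length_le
  obtain ⟨w₀, hw₀, hw₀_ge⟩ : ∃ w ∈ X, wobj ≤ w := by simpa using hlt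
  have hquarter : ∀ w ∈ X, wobj / 4 ≤ w := fun w hw => by
    linarith [hX.le_four_mul w₀ hw₀ w hw]
  have hlen : (X.length : ℝ) * (wobj / 4) ≤ Nobj * wobj := by
    rw [← hX.sum_eq, ← nsmul_eq_mul]
    exact List.card_nsmul_le_sum X _ hquarter
  have hlen' : (X.length : ℝ) ≤ 4 * Nobj := by nlinarith
  exact h.chainInvariant_of_length_le hwobj hpos hX.sum_eq (by exact_mod_cast hlen')

theorem conservative_chain_bounds_general (Nobj : ℕ)
    (wobj : ℝ) (hwobj : 0 < wobj) (X : ℕ → List ℝ)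
    (hpos : ∀ w ∈ X 0, 0 < w)
    (hlen : (X 0).length ≤ Nobj)
    (hsum : (X 0).sum = (Nobj : ℝ) * wobj)
    (hstep : ∀ l, StepRel Nobj wobj (X l) (X (l + 1))) :
    (∀ l, (X l).length ≤ 6 * Nobj) ∧
    (∀ l, 1 ≤ l → ∀ w ∈ X l, wobj / 10 ≤ w) := by
  have hinv : ∀ l, ChainInvariant Nobj wobj (X (l + 1)) := by
    intro l
    induction l with
    | zero => exact (hstep 0).chainInvariant_of_length_le hwobj hpos hsum (by omega)
    | succ l ih => exact ih.step hwobj (hstep (l + 1))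
  refine ⟨fun l => ?_, fun l hl => ?_⟩
  · cases l with
    | zero => omega
    | succ l => exact (hinv l).length_le.trans (by omega)
  · obtain ⟨l, rfl⟩ := Nat.exists_eq_add_of_le' hl
    exact (hinv l).le_of_mem

/-- For the conservative splitting chain started with at most `N_obj` particles
of total mass `N_obj·w_obj`, the number of particles satisfies
`N_l ≤ 6·N_obj` for all `l ≥ 0` and the minimal nonzero weight is at least
`w_obj/10` for all `l ≥ 1`. -/
theorem conservative_chain_bounds (Nobj : ℕ) (hNobj : 1 ≤ Nobj)
    (wobj : ℝ) (hwobj : 0 < wobj) (X : ℕ → List ℝ)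
    (hpos : ∀ w ∈ X 0, 0 < w)
    (hlen : (X 0).length ≤ Nobj)
    (hsum : (X 0).sum = (Nobj : ℝ) * wobj)
    (hstep : ∀ l, StepRel Nobj wobj (X l) (X (l + 1))) :
    (∀ l, (X l).length ≤ 6 * Nobj) ∧
    (∀ l, 1 ≤ l → ∀ w ∈ X l, wobj / 10 ≤ w) :=
  conservative_chain_bounds_general Nobj wobj hwobj X hpos hlen hsum hstep
end

section
/- Under the event that all N_obj particles of weights w_obj(1+ε_j) (Σε_j=0, Σ|ε_j|=ε<1) survive Russian Roulette without splitting, and after renormalization to total mass N_obj·w_obj, the new deviation satisfies Σ_j |X'_j - w_obj| ≤ ε·w_obj·(N_obj-1)/N_obj. Consequently, iterating, the state converges to the uniform distribution with probability at least ∏_{a≥1}(1 - ε((N_obj-1)/N_obj)^a) ≥ 1 - ε·N_obj. -/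
/-!
Write `N` for the number of particles and `ε / 2 = ∑ⱼ (εⱼ)⁺`, which holds because `∑ⱼ εⱼ = 0`.
After renormalization by `N / (N + ε / 2)` a particle with `εⱼ ≤ 0` deviates from `w` by
`w (ε / 2) / (N + ε / 2)`, and one with `εⱼ > 0` by `w |N εⱼ - ε / 2| / (N + ε / 2)`, which is at most
`w (ε / 2 + (N - 2) εⱼ) / (N + ε / 2)` because `εⱼ ≤ ε / 2`. Summing gives
`ε w (N - 1) / (N + ε / 2) ≤ ε w (N - 1) / N`.

For the product, the Weierstrass inequality `∏ (1 - xₐ) ≥ 1 - ∑ xₐ` passes to the infinite product,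
and `∑_{a ≥ 1} ε ((N - 1) / N)^a = ε (N - 1)`.
-/

open Finset

theorem Finset.sum_posPart_eq_half_sum_abs {ι : Type*} (s : Finset ι) {f : ι → ℝ}
    (hf : ∑ i ∈ s, f i = 0) :
    ∑ i ∈ s, (f i)⁺ = (∑ i ∈ s, |f i|) / 2 := by
  have htwo : ∀ a : ℝ, 2 * a⁺ = a + |a| := fun a => by
    rw [← posPart_add_negPart a]; nth_rewrite 2 [← posPart_sub_negPart a]; ring
  have := sum_congr rfl fun i (_ : i ∈ s) => htwo (f i)
  rw [← mul_sum, sum_add_distrib, hf] at this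
  linarith

theorem abs_renormalized_weight_sub_le {N s w e : ℝ} (hN : 1 ≤ N) (hs : 0 ≤ s) (hw : 0 < w)
    (he : e ≤ s) :
    |N / (N + s) * (if e ≤ 0 then w else w * (1 + e)) - w| ≤ w / (N + s) * (s + (N - 2) * e⁺) := by
  have hden : 0 < N + s := by linarith
  split_ifs with hneg
  · rw [posPart_eq_zero.mpr hneg, mul_zero, add_zero,
      show N / (N + s) * w - w = -(w / (N + s) * s) by field_simp; ring, abs_neg,
      abs_of_nonneg (by positivity)]
  · rw [posPart_eq_self.mpr (not_le.mp hneg).le,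
      show N / (N + s) * (w * (1 + e)) - w = w / (N + s) * (N * e - s) by field_simp; ring,
      abs_mul, abs_of_pos (by positivity)]
    gcongr
    rw [abs_le]
    constructor <;> nlinarith

theorem sum_abs_renormalized_weight_sub_le {ι : Type*} [Fintype ι] (hcard : 1 ≤ Fintype.card ι)
    {w ε : ℝ} (hw : 0 < w) {e : ι → ℝ} (hsum0 : ∑ i, e i = 0) (hsumabs : ∑ i, |e i| = ε) :
    ∑ i, |(Fintype.card ι : ℝ) / (Fintype.card ι + ε / 2) *
        (if e i ≤ 0 then w else w * (1 + e i)) - w|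
      ≤ ε * w * ((Fintype.card ι : ℝ) - 1) / Fintype.card ι := by
  have hN : (1 : ℝ) ≤ Fintype.card ι := by exact_mod_cast hcard
  set N : ℝ := (Fintype.card ι : ℝ)
  have hpos : ∑ i, (e i)⁺ = ε / 2 := by rw [univ.sum_posPart_eq_half_sum_abs hsum0, hsumabs]
  have hε : 0 ≤ ε := hsumabs ▸ sum_nonneg fun i _ => abs_nonneg (e i)
  have hle : ∀ i, e i ≤ ε / 2 := fun i =>
    hpos ▸ (le_posPart (e i)).trans (single_le_sum (fun j _ => posPart_nonneg (e j)) (mem_univ i))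
  calc _ ≤ ∑ i, w / (N + ε / 2) * (ε / 2 + (N - 2) * (e i)⁺) :=
        sum_le_sum fun i _ => abs_renormalized_weight_sub_le hN (by positivity) hw (hle i)
    _ = ε * w * (N - 1) / (N + ε / 2) := by
        rw [← mul_sum, sum_add_distrib, ← mul_sum, hpos, sum_const, card_univ, nsmul_eq_mul]
        ring
    _ ≤ ε * w * (N - 1) / N := by
        gcongr
        nlinarith

theorem Finset.one_sub_sum_le_prod_one_sub {ι : Type*} (s : Finset ι) {x : ι → ℝ}
    (h0 : ∀ i, 0 ≤ x i) (h1 : ∀ i, x i ≤ 1) :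
    1 - ∑ i ∈ s, x i ≤ ∏ i ∈ s, (1 - x i) := by
  classical
  induction s using Finset.induction_on with
  | empty => simp
  | @insert j s hj ih =>
    rw [sum_insert hj, prod_insert hj]
    have hs : 0 ≤ ∑ i ∈ s, x i := sum_nonneg fun i _ => h0 i
    nlinarith [h0 j, h1 j]

theorem one_sub_tsum_le_tprod_one_sub {ι : Type*} {x : ι → ℝ}
    (h0 : ∀ i, 0 ≤ x i) (h1 : ∀ i, x i ≤ 1) (hx : Summable x) :
    1 - ∑' i, x i ≤ ∏' i, (1 - x i) := by
  by_cases hprod : Multipliable fun i => 1 - x i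
  · refine ge_of_tendsto' hprod.hasProd fun s => ?_
    calc 1 - ∑' i, x i ≤ 1 - ∑ i ∈ s, x i := by
          gcongr; exact hx.sum_le_tsum s fun i _ => h0 i
      _ ≤ ∏ i ∈ s, (1 - x i) := s.one_sub_sum_le_prod_one_sub h0 h1
  · rw [tprod_eq_one_of_not_multipliable hprod]
    exact sub_le_self _ (tsum_nonneg h0)

theorem hasSum_pow_succ_sub_one_div (N : ℝ) (hN : 1 ≤ N) :
    HasSum (fun n : ℕ => ((N - 1) / N) ^ (n + 1)) (N - 1) := by
  have hN0 : 0 < N := by linarith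
  have hq0 : 0 ≤ (N - 1) / N := div_nonneg (by linarith) hN0.le
  have hq1 : (N - 1) / N < 1 := by rw [div_lt_one hN0]; linarith
  have hsum : (N - 1) / N * (1 - (N - 1) / N)⁻¹ = N - 1 := by
    rw [show 1 - (N - 1) / N = N⁻¹ by field_simp; ring, inv_inv, div_mul_cancel₀ _ hN0.ne']
  simpa only [pow_succ', hsum] using (hasSum_geometric_of_lt_one hq0 hq1).mul_left ((N - 1) / N)

theorem one_sub_mul_le_tprod_one_sub_mul_pow (N ε : ℝ) (hN : 1 ≤ N)
    (hε0 : 0 ≤ ε) (hε1 : ε ≤ 1) :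
    1 - ε * N ≤ ∏' a : ℕ, (1 - ε * ((N - 1) / N) ^ (a + 1)) := by
  have hgeom := hasSum_pow_succ_sub_one_div N hN
  have hq0 : 0 ≤ (N - 1) / N := div_nonneg (by linarith) (by linarith)
  have hq1 : (N - 1) / N ≤ 1 := by rw [div_le_one (by linarith)]; linarith
  calc 1 - ε * N ≤ 1 - ε * (N - 1) := by nlinarith
    _ = 1 - ∑' a : ℕ, ε * ((N - 1) / N) ^ (a + 1) := by rw [(hgeom.mul_left ε).tsum_eq]
    _ ≤ ∏' a : ℕ, (1 - ε * ((N - 1) / N) ^ (a + 1)) :=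
        one_sub_tsum_le_tprod_one_sub (fun a => by positivity)
          (fun a => mul_le_one₀ hε1 (by positivity) (pow_le_one₀ hq0 hq1))
          (hgeom.mul_left ε).summable

theorem deviation_contracts_general (Nobj : ℕ) (hN : 1 ≤ Nobj)
    (wobj ε : ℝ) (hw : 0 < wobj) (hε0 : 0 < ε) (hε1 : ε < 1)
    (e : Fin Nobj → ℝ)
    (hsum0 : ∑ j, e j = 0) (hsumabs : ∑ j, |e j| = ε) :
    (∑ j, |((Nobj : ℝ) / ((Nobj : ℝ) + ε / 2)) *
        (if e j ≤ 0 then wobj else wobj * (1 + e j)) - wobj|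
      ≤ ε * wobj * ((Nobj : ℝ) - 1) / Nobj) ∧
    (1 - ε * Nobj ≤ ∏' a : ℕ, (1 - ε * (((Nobj : ℝ) - 1) / Nobj) ^ (a + 1))) := by
  constructor
  · simpa only [Fintype.card_fin] using
      sum_abs_renormalized_weight_sub_le (by simpa using hN) hw hsum0 hsumabs
  · exact one_sub_mul_le_tprod_one_sub_mul_pow Nobj ε (by exact_mod_cast hN) hε0.le hε1.le

/-- Under the event that all `N_obj` particles of weights `w_obj(1+ε_j)`
(`Σ ε_j = 0`, `Σ |ε_j| = ε < 1`) survive Russian Roulette without splitting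
(the survivors of RR get weight `w_obj`, the others keep `w_obj(1+ε_j)`) and
after renormalization by `N_obj/(N_obj+ε/2)`, the new ℓ¹ deviation from the
uniform vector is at most `ε·w_obj·(N_obj-1)/N_obj`; moreover, iterating, the
convergence probability `∏_{a≥1}(1-ε((N_obj-1)/N_obj)^a)` is at least
`1 - ε·N_obj`. -/
theorem deviation_contracts (Nobj : ℕ) (hN : 1 ≤ Nobj)
    (wobj ε : ℝ) (hw : 0 < wobj) (hε0 : 0 < ε) (hε1 : ε < 1)
    (e : Fin Nobj → ℝ) (habs : ∀ j, |e j| < 1)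
    (hsum0 : ∑ j, e j = 0) (hsumabs : ∑ j, |e j| = ε) :
    (∑ j, |((Nobj : ℝ) / ((Nobj : ℝ) + ε / 2)) *
        (if e j ≤ 0 then wobj else wobj * (1 + e j)) - wobj|
      ≤ ε * wobj * ((Nobj : ℝ) - 1) / Nobj) ∧
    (1 - ε * Nobj ≤ ∏' a : ℕ, (1 - ε * (((Nobj : ℝ) - 1) / Nobj) ^ (a + 1))) :=
  deviation_contracts_general Nobj hN wobj ε hw hε0 hε1 e hsum0 hsumabs
end
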